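/- arXiv:2504.20793 — 2 statements merged into one kernel-verified Lean document; each statement's English description precedes it below -/
import Mathlib

section
/- Let G = GL_{n+1}(ℝ), P_G its subgroup of upper triangular invertible matrices, and H = GL_n(ℝ) embedded in G as block-diagonal matrices diag(h,1), with P_H the upper triangular matrices in H. For 0 ≤ k ≤ n let x_k be the (n+1)×(n+1) permutation matrix with block form [[I_k,0,0],[0,0,I_{n-k}],[0,1,0]]. Then P_H · x_k · P_G ⊆ x_k · P_G for every 0 ≤ k ≤ n, and conversely every coset xP_G in G/P_G satisfying P_H x P_G ⊆ x P_G equals x_k P_G for some 0 ≤ k ≤ n. -/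
/-!
`x_k` is the permutation matrix of `σ_k : i ↦ k.succAbove i (i < n), n ↦ k`, and `diag(p, 1)`
is block triangular with respect to `σ_k` whenever `p` is upper triangular; hence
`x_k⁻¹ P_H x_k ⊆ P_G`.

Conversely, `P_H x P_G ⊆ x P_G` means `x⁻¹ P_H x ⊆ P_G`. Testing it on `1 + E_ij`
(`i ≤ j < n`) shows `(x⁻¹)_{a i} x_{j b} = 0` for `b < a`. With `x x⁻¹ = 1` this gives, for each
`i < n`, an index `t_i` beyond which column `i` of `x⁻¹` vanishes and before which row `i` of `x`
vanishes, and `t` is strictly increasing, so `t = k.succAbove` for the one value `k` it misses.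
Row `n` of `x` vanishes before `k` because it is orthogonal to the columns `0, …, k-1` of `x⁻¹`,
which are triangular; so `x_k⁻¹ x` is upper triangular.
-/

open Matrix

/-- The embedding `GL_n(ℝ) → GL_{n+1}(ℝ)`, `h ↦ diag(h,1)`. -/
def embH (n : ℕ) (h : Matrix (Fin n) (Fin n) ℝ) : Matrix (Fin (n+1)) (Fin (n+1)) ℝ :=
  fun i j =>
    if hi : (i : ℕ) < n then
      if hj : (j : ℕ) < n then h ⟨i, hi⟩ ⟨j, hj⟩ else 0
    else if (j : ℕ) < n then 0 else 1

/-- The permutation matrix `x_k` with block form `[[I_k,0,0],[0,0,I_{n-k}],[0,1,0]]`. -/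
def xmat (n k : ℕ) : Matrix (Fin (n+1)) (Fin (n+1)) ℝ :=
  fun i j =>
    if ((i : ℕ) < k ∧ j = i) ∨ (k ≤ (i : ℕ) ∧ (i : ℕ) < n ∧ (j : ℕ) = (i : ℕ) + 1)
        ∨ ((i : ℕ) = n ∧ (j : ℕ) = k) then 1 else 0

/-- Upper triangular matrices. -/
def UT (m : ℕ) (A : Matrix (Fin m) (Fin m) ℝ) : Prop := A.BlockTriangular id

section Perm

variable {ι R : Type*} [Fintype ι] [DecidableEq ι] [Semiring R]

lemma Equiv.Perm.permMatrix_mul_permMatrix_inv (σ : Equiv.Perm ι) :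
    σ.permMatrix R * σ⁻¹.permMatrix R = 1 := by
  rw [← Matrix.permMatrix_mul, inv_mul_cancel, Matrix.permMatrix_one]

lemma Equiv.Perm.permMatrix_inv_mul_permMatrix (σ : Equiv.Perm ι) :
    σ⁻¹.permMatrix R * σ.permMatrix R = 1 := by
  rw [← Matrix.permMatrix_mul, mul_inv_cancel, Matrix.permMatrix_one]

lemma Matrix.mul_single_one_mul_apply (M N : Matrix ι ι R) (i j a b : ι) :
    (M * Matrix.single i j (1 : R) * N : Matrix ι ι R) a b = M a i * N j b := by
  rw [Matrix.mul_apply, Finset.sum_eq_single j (fun l _ hl => by simp [hl]) (by simp),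
    Matrix.mul_single_apply_same, mul_one]

variable [LinearOrder ι]

lemma Matrix.BlockTriangular.permMatrix_inv_mul_mul_permMatrix {σ : Equiv.Perm ι}
    {A : Matrix ι ι R} (hA : A.BlockTriangular σ) :
    (σ⁻¹.permMatrix R * A * σ.permMatrix R).BlockTriangular id := by
  rw [Equiv.Perm.permMatrix, PEquiv.toMatrix_toPEquiv_mul, Equiv.Perm.permMatrix,
    PEquiv.mul_toMatrix_toPEquiv]
  simpa using hA.submatrix (f := σ.symm)

lemma Matrix.blockTriangular_permMatrix_inv_mul_of_eq_zero {σ : Equiv.Perm ι} {x : Matrix ι ι R}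
    (hx : ∀ i b, b < σ i → x i b = 0) : (σ⁻¹.permMatrix R * x).BlockTriangular id := by
  intro a b hab
  rw [Equiv.Perm.permMatrix, PEquiv.toMatrix_toPEquiv_mul]
  exact hx _ _ (by simpa using hab)

end Perm

lemma Fin.exists_succAbove_eq_of_strictMono {n : ℕ} {t : Fin n → Fin (n + 1)}
    (ht : StrictMono t) : ∃ k : Fin (n + 1), k.succAbove = t := by
  obtain ⟨k, hk⟩ : ∃ k, k ∉ Set.range t := by
    by_contra! h
    have := Fintype.card_le_of_surjective t fun k => h k
    simp at this
  refine ⟨k, ((Fin.strictMono_succAbove k).range_inj ht).mp ?_⟩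
  refine (Set.eq_of_subset_of_ncard_le ?_ ?_ (Set.toFinite _)).symm
  · rw [Fin.range_succAbove]
    exact fun a ha h => hk (h ▸ ha)
  · rw [Set.ncard_range_of_injective ht.injective,
      Set.ncard_range_of_injective (Fin.strictMono_succAbove k).injective]

def xPerm {n : ℕ} (k : Fin (n + 1)) : Equiv.Perm (Fin (n + 1)) :=
  finSuccEquivLast.trans (finSuccEquiv' k).symm

@[simp] lemma xPerm_castSucc {n : ℕ} (k : Fin (n + 1)) (i : Fin n) :
    xPerm k i.castSucc = k.succAbove i := by
  simp [xPerm, finSuccEquivLast_castSucc]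

@[simp] lemma xPerm_last {n : ℕ} (k : Fin (n + 1)) : xPerm k (Fin.last n) = k := by
  simp [xPerm, finSuccEquivLast_last]

lemma xmat_eq_permMatrix {n : ℕ} (k : Fin (n + 1)) : xmat n k = (xPerm k).permMatrix ℝ := by
  ext i j
  have := k.isLt
  have := j.isLt
  rw [Equiv.Perm.permMatrix, PEquiv.toMatrix_toPEquiv_apply, Pi.single_apply]
  induction i using Fin.lastCases with
  | last =>
    simp only [xmat, xPerm_last, Fin.val_last, Fin.ext_iff, true_and]
    split_ifs <;> first | rfl | omega
  | cast i =>
    simp only [xmat, xPerm_castSucc, Fin.succAbove, Fin.lt_def, Fin.ext_iff, apply_ite Fin.val,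
      Fin.val_castSucc, Fin.val_succ]
    split_ifs <;> first | rfl | omega

section Pivot

variable {ι K : Type*} [Fintype ι] [LinearOrder ι] [Semiring K]

lemma dotProduct_eq_mul_of_eq_zero_of_lt {u v : ι → K} {t : ι} (hv : ∀ b < t, v b = 0)
    (hu : ∀ a, t < a → u a = 0) : v ⬝ᵥ u = v t * u t := by
  refine Finset.sum_eq_single t (fun l _ hl => ?_) (by simp)
  rcases hl.lt_or_gt with h | h
  · rw [hv l h, zero_mul]
  · rw [hu l h, mul_zero]

structure IsPivot (u v : ι → K) (t : ι) : Prop where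
  left_ne_zero : u t ≠ 0
  right_ne_zero : v t ≠ 0
  right_eq_zero_of_lt : ∀ b < t, v b = 0
  left_eq_zero_of_gt : ∀ a, t < a → u a = 0

lemma exists_isPivot [NoZeroDivisors K] {u v : ι → K} (huv : v ⬝ᵥ u ≠ 0)
    (h : ∀ a b, b < a → u a * v b = 0) : ∃ t, IsPivot u v t := by
  obtain ⟨t, -, ht⟩ := Finset.exists_ne_zero_of_sum_ne_zero huv
  obtain ⟨hvt, hut⟩ := mul_ne_zero_iff.mp ht
  exact ⟨t, hut, hvt, fun b hb => (mul_eq_zero.mp (h t b hb)).resolve_left hut,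
    fun a ha => (mul_eq_zero.mp (h a t ha)).resolve_right hvt⟩

end Pivot

section PivotRows

variable {K : Type*} [Semiring K] {n : ℕ} {x y : Matrix (Fin (n + 1)) (Fin (n + 1)) K}

lemma exists_isPivot_col_row [NoZeroDivisors K] [Nontrivial K] (hxy : x * y = 1)
    (hyx : ∀ i j : Fin n, i ≤ j → ∀ a b, b < a → y a i.castSucc * x j.castSucc b = 0)
    (i : Fin n) : ∃ t, IsPivot (fun a => y a i.castSucc) (x i.castSucc) t := by
  refine exists_isPivot ?_ (hyx i i le_rfl)
  rw [← Matrix.mul_apply', hxy, Matrix.one_apply_eq]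
  exact one_ne_zero

lemma strictMono_of_isPivot_col_row [NoZeroDivisors K] (hxy : x * y = 1)
    (hyx : ∀ i j : Fin n, i ≤ j → ∀ a b, b < a → y a i.castSucc * x j.castSucc b = 0)
    {t : Fin n → Fin (n + 1)}
    (ht : ∀ i, IsPivot (fun a => y a i.castSucc) (x i.castSucc) (t i)) : StrictMono t := by
  intro i j hij
  have hle : t i ≤ t j := not_lt.mp fun hlt =>
    mul_ne_zero (ht i).left_ne_zero (ht j).right_ne_zero (hyx i j hij.le _ _ hlt)
  refine hle.lt_of_ne fun heq => ?_
  have hji : x j.castSucc ⬝ᵥ (fun a => y a i.castSucc) = 0 := by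
    rw [← Matrix.mul_apply', hxy, Matrix.one_apply_ne ((Fin.castSucc_injective n).ne hij.ne')]
  rw [dotProduct_eq_mul_of_eq_zero_of_lt (t := t j) (ht j).right_eq_zero_of_lt
    (heq ▸ (ht i).left_eq_zero_of_gt)] at hji
  exact mul_ne_zero (ht j).right_ne_zero (heq ▸ (ht i).left_ne_zero) hji

lemma last_row_eq_zero_of_lt [NoZeroDivisors K] (hxy : x * y = 1) {k : Fin (n + 1)}
    (ht : ∀ i, IsPivot (fun a => y a i.castSucc) (x i.castSucc) (k.succAbove i)) :
    ∀ b < k, x (Fin.last n) b = 0 := by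
  intro b
  induction b using WellFoundedLT.induction with
  | ind b ih =>
    intro hbk
    obtain ⟨b, rfl⟩ := Fin.exists_castSucc_eq.mpr (hbk.trans_le (Fin.le_last k)).ne
    have hpiv := ht b
    rw [Fin.succAbove_of_castSucc_lt _ _ hbk] at hpiv
    have hzero : x (Fin.last n) ⬝ᵥ (fun a => y a b.castSucc) = 0 := by
      rw [← Matrix.mul_apply', hxy, Matrix.one_apply_ne (Fin.castSucc_lt_last b).ne']
    rw [dotProduct_eq_mul_of_eq_zero_of_lt (fun c hc => ih c hc (hc.trans hbk))
      hpiv.left_eq_zero_of_gt] at hzero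
    exact (mul_eq_zero.mp hzero).resolve_right hpiv.left_ne_zero

lemma exists_xPerm_row_eq_zero_of_lt [NoZeroDivisors K] [Nontrivial K] (hxy : x * y = 1)
    (hyx : ∀ i j : Fin n, i ≤ j → ∀ a b, b < a → y a i.castSucc * x j.castSucc b = 0) :
    ∃ k : Fin (n + 1), ∀ i b, b < xPerm k i → x i b = 0 := by
  choose t ht using exists_isPivot_col_row hxy hyx
  obtain ⟨k, rfl⟩ :=
    Fin.exists_succAbove_eq_of_strictMono (strictMono_of_isPivot_col_row hxy hyx ht)
  refine ⟨k, fun i => ?_⟩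
  induction i using Fin.lastCases with
  | last => simpa using last_row_eq_zero_of_lt hxy ht
  | cast i => simpa using (ht i).right_eq_zero_of_lt

end PivotRows

section embH

variable {n : ℕ} (p : Matrix (Fin n) (Fin n) ℝ)

@[simp] lemma embH_castSucc_castSucc (i j : Fin n) : embH n p i.castSucc j.castSucc = p i j := by
  simp [embH]

@[simp] lemma embH_castSucc_last (i : Fin n) : embH n p i.castSucc (Fin.last n) = 0 := by
  simp [embH]

@[simp] lemma embH_last_castSucc (j : Fin n) : embH n p (Fin.last n) j.castSucc = 0 := by
  simp [embH]

@[simp] lemma embH_last_last : embH n p (Fin.last n) (Fin.last n) = 1 := by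
  simp [embH]

lemma det_embH : (embH n p).det = p.det := by
  have hsub : (embH n p).submatrix Fin.castSucc Fin.castSucc = p := by ext; simp
  rw [Matrix.det_succ_row _ (Fin.last n), Fin.sum_univ_castSucc]
  simp [hsub]

lemma embH_one_add_single (i j : Fin n) (c : ℝ) :
    embH n (1 + Matrix.single i j c) = 1 + Matrix.single i.castSucc j.castSucc c := by
  ext a b
  induction a using Fin.lastCases <;> induction b using Fin.lastCases <;>
    simp [Matrix.one_apply, Matrix.single_apply, Fin.castSucc_ne_last,
      (Fin.castSucc_ne_last _).symm]

end embH

lemma embH_blockTriangular_xPerm {n : ℕ} {p : Matrix (Fin n) (Fin n) ℝ} (hp : UT n p)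
    (k : Fin (n + 1)) : (embH n p).BlockTriangular (xPerm k) := by
  intro i j hij
  induction i using Fin.lastCases <;> induction j using Fin.lastCases
  · exact absurd hij (lt_irrefl _)
  · simp
  · simp
  · simp only [xPerm_castSucc, Fin.succAbove_lt_succAbove_iff] at hij
    simpa using hp hij

lemma exists_embH_mul_xmat_mul_eq_xmat_mul {n : ℕ} (k : Fin (n + 1))
    {p : Matrix (Fin n) (Fin n) ℝ} {q : Matrix (Fin (n + 1)) (Fin (n + 1)) ℝ}
    (hp : UT n p) (hp_det : IsUnit p.det) (hq : UT (n + 1) q) (hq_det : IsUnit q.det) :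
    ∃ r : Matrix (Fin (n + 1)) (Fin (n + 1)) ℝ, UT (n + 1) r ∧ IsUnit r.det ∧
      embH n p * xmat n k * q = xmat n k * r := by
  set σ := xPerm k
  have hσ := σ.permMatrix_mul_permMatrix_inv (R := ℝ)
  have hσ' := σ.permMatrix_inv_mul_permMatrix (R := ℝ)
  refine ⟨σ⁻¹.permMatrix ℝ * embH n p * σ.permMatrix ℝ * q,
    ((embH_blockTriangular_xPerm hp k).permMatrix_inv_mul_mul_permMatrix).mul hq, ?_, ?_⟩
  · simp only [Matrix.det_mul, det_embH]
    exact (((Matrix.isUnit_det_of_right_inverse hσ').mul hp_det).mul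
      (Matrix.isUnit_det_of_right_inverse hσ)).mul hq_det
  · rw [xmat_eq_permMatrix, ← Matrix.mul_assoc, ← Matrix.mul_assoc, ← Matrix.mul_assoc, hσ,
      Matrix.one_mul]

lemma inv_mul_mul_eq_zero_of_conj {n : ℕ} {x : Matrix (Fin (n + 1)) (Fin (n + 1)) ℝ}
    (hx : IsUnit x.det)
    (hconj : ∀ p : Matrix (Fin n) (Fin n) ℝ, UT n p → IsUnit p.det →
      ∃ r : Matrix (Fin (n + 1)) (Fin (n + 1)) ℝ, UT (n + 1) r ∧ embH n p * x = x * r)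
    (i j : Fin n) (hij : i ≤ j) (a b : Fin (n + 1)) (hba : b < a) :
    x⁻¹ a i.castSucc * x j.castSucc b = 0 := by
  have hp : UT n (1 + Matrix.single i j 1) := by
    refine Matrix.blockTriangular_one.add fun c d hdc => ?_
    rw [Matrix.single_apply, if_neg]
    rintro ⟨rfl, rfl⟩
    exact hdc.not_ge hij
  have hp_det : IsUnit (1 + Matrix.single i j (1 : ℝ)).det := by
    rw [Matrix.det_of_isUpperTriangular hp, isUnit_iff_ne_zero, Finset.prod_ne_zero_iff]
    intro c _
    rw [Matrix.add_apply, Matrix.one_apply_eq, Matrix.single_apply]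
    split_ifs <;> norm_num
  obtain ⟨r, hr, heq⟩ := hconj _ hp hp_det
  rw [embH_one_add_single, add_mul, one_mul] at heq
  have hsingle : x⁻¹ * Matrix.single i.castSucc j.castSucc 1 * x = r - 1 := by
    calc x⁻¹ * Matrix.single i.castSucc j.castSucc 1 * x = x⁻¹ * (x * r - x) := by
          rw [← heq, add_sub_cancel_left, Matrix.mul_assoc]
      _ = r - 1 := by
          rw [Matrix.mul_sub, ← Matrix.mul_assoc, Matrix.nonsing_inv_mul _ hx, Matrix.one_mul]
  have := (hr.sub Matrix.blockTriangular_one) hba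
  rwa [← hsingle, Matrix.mul_single_one_mul_apply] at this

lemma exists_eq_xmat_mul {n : ℕ} {x : Matrix (Fin (n + 1)) (Fin (n + 1)) ℝ} (hx : IsUnit x.det)
    (hconj : ∀ p : Matrix (Fin n) (Fin n) ℝ, UT n p → IsUnit p.det →
      ∃ r : Matrix (Fin (n + 1)) (Fin (n + 1)) ℝ, UT (n + 1) r ∧ embH n p * x = x * r) :
    ∃ k ≤ n, ∃ r : Matrix (Fin (n + 1)) (Fin (n + 1)) ℝ, UT (n + 1) r ∧ IsUnit r.det ∧
      x = xmat n k * r := by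
  obtain ⟨k, hk⟩ := exists_xPerm_row_eq_zero_of_lt (Matrix.mul_nonsing_inv x hx)
    (inv_mul_mul_eq_zero_of_conj hx hconj)
  set σ := xPerm k
  refine ⟨k, Fin.is_le k, σ⁻¹.permMatrix ℝ * x,
    Matrix.blockTriangular_permMatrix_inv_mul_of_eq_zero hk, ?_, ?_⟩
  · rw [Matrix.det_mul]
    exact (Matrix.isUnit_det_of_right_inverse σ.permMatrix_inv_mul_permMatrix).mul hx
  · rw [xmat_eq_permMatrix, ← Matrix.mul_assoc, σ.permMatrix_mul_permMatrix_inv, Matrix.one_mul]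

theorem stmt0 (n : ℕ) :
    (∀ k ≤ n, ∀ (p : Matrix (Fin n) (Fin n) ℝ) (q : Matrix (Fin (n+1)) (Fin (n+1)) ℝ),
      UT n p → IsUnit p.det → UT (n+1) q → IsUnit q.det →
      ∃ r : Matrix (Fin (n+1)) (Fin (n+1)) ℝ, UT (n+1) r ∧ IsUnit r.det ∧
        embH n p * xmat n k * q = xmat n k * r)
    ∧
    (∀ x : Matrix (Fin (n+1)) (Fin (n+1)) ℝ, IsUnit x.det →
      (∀ (p : Matrix (Fin n) (Fin n) ℝ) (q : Matrix (Fin (n+1)) (Fin (n+1)) ℝ),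
        UT n p → IsUnit p.det → UT (n+1) q → IsUnit q.det →
        ∃ r : Matrix (Fin (n+1)) (Fin (n+1)) ℝ, UT (n+1) r ∧ IsUnit r.det ∧
          embH n p * x * q = x * r) →
      ∃ k ≤ n, ∃ r : Matrix (Fin (n+1)) (Fin (n+1)) ℝ, UT (n+1) r ∧ IsUnit r.det ∧
        x = xmat n k * r) := by
  refine ⟨fun k hk p q hp hp_det hq hq_det => ?_, fun x hx hyp => ?_⟩
  · exact exists_embH_mul_xmat_mul_eq_xmat_mul ⟨k, Nat.lt_succ_of_le hk⟩ hp hp_det hq hq_det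
  · refine exists_eq_xmat_mul hx fun p hp hp_det => ?_
    obtain ⟨r, hr, -, heq⟩ := hyp p 1 hp hp_det Matrix.blockTriangular_one (by simp)
    exact ⟨r, hr, by rwa [Matrix.mul_one] at heq⟩
end

section
/- Let n_1, n_2 ∈ ℕ, N = min(n_1,n_2), and λ_1, λ_2, λ_3 ∈ ℂ. Consider the linear recurrence (λ_1 − λ_3 + n_1 + n_2 − j)(j+1) c_{j+1} = −(λ_2 − λ_3 + n_2 − j)(n_1 − j)(n_2 − j) c_j for 0 ≤ j ≤ N−1 on sequences (c_0,…,c_N) ∈ ℂ^{N+1}. If there exist integers 0 ≤ k_0 ≤ ℓ_0 ≤ N−1 with λ_1 − λ_3 + n_1 + n_2 − ℓ_0 = 0 and λ_2 − λ_3 + n_2 − k_0 = 0, then the space of solutions is exactly 2-dimensional; otherwise, the solution space is exactly 1-dimensional. -/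
/-!
`A_j = (α - j)(j + 1)` vanishes for at most one `j`. Outside the degenerate case a solution is
determined by `c_{i₀}`, where `i₀` is one past that zero (or `0`): from `i₀` it propagates forward
dividing by `A_j ≠ 0` and backward dividing by `B_j ≠ 0`. In the degenerate case the equation at
`ℓ₀` reads `0 = B_{ℓ₀} c_{ℓ₀}`; it holds for the solution started at `c_0 = 1`, which carries the
factor `B_{k₀} = 0`, so `c_0` and `c_{ℓ₀+1}` can both be chosen freely.
-/

/-- The space of solutions `(c_0,…,c_N)` of the linear recurrence
`A j · c_{j+1} = B j · c_j` for `0 ≤ j ≤ N−1`, as a subspace of `ℂ^{N+1}`. -/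
noncomputable def solSpace (N : ℕ) (A B : ℕ → ℂ) : Submodule ℂ (Fin (N+1) → ℂ) where
  carrier := {c | ∀ j : Fin N, A j * c j.succ = B j * c j.castSucc}
  add_mem' := by
    intro a b ha hb j
    simp only [Pi.add_apply, mul_add, ha j, hb j]
  zero_mem' := by
    intro j
    simp
  smul_mem' := by
    intro r x hx j
    simp only [Pi.smul_apply, smul_eq_mul]
    rw [mul_left_comm, hx j, mul_left_comm]

open Finset

theorem Submodule.finrank_eq_of_eval_injective {K ι : Type*} [Field K] {m : ℕ}
    (W : Submodule K (ι → K)) (p : Fin m → ι)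
    (hinj : ∀ c ∈ W, (∀ k, c (p k) = 0) → c = 0)
    (e : Fin m → ι → K) (he : ∀ k, e k ∈ W) (hδ : ∀ k l, e k (p l) = if k = l then 1 else 0) :
    Module.finrank K W = m := by
  let φ : W →ₗ[K] (Fin m → K) := LinearMap.funLeft K K p ∘ₗ W.subtype
  have hφ : Function.Bijective φ := by
    refine ⟨(injective_iff_map_eq_zero φ).mpr fun c hc ↦ ?_, fun x ↦ ?_⟩
    · exact Subtype.ext (hinj c c.2 (congrFun hc))
    · refine ⟨⟨∑ k, x k • e k, W.sum_mem fun k _ ↦ W.smul_mem _ (he k)⟩, funext fun l ↦ ?_⟩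
      simp [φ, LinearMap.funLeft, hδ]
  exact (LinearEquiv.ofBijective φ hφ).finrank_eq.trans (Module.finrank_fin_fun K)

namespace solSpace

variable {N : ℕ} {A B : ℕ → ℂ} {c : Fin (N + 1) → ℂ}

theorem eq_zero_of_forward (hc : c ∈ solSpace N A B) {i k : ℕ} (hik : i ≤ k) (hk : k ≤ N)
    (hA : ∀ j, i ≤ j → j < k → A j ≠ 0) (hi : c ⟨i, by omega⟩ = 0) : c ⟨k, by omega⟩ = 0 := by
  induction k, hik using Nat.le_induction with
  | base => exact hi
  | succ k hik ih =>
    have hrec : A k * c ⟨k + 1, by omega⟩ = B k * c ⟨k, by omega⟩ := hc ⟨k, by omega⟩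
    rw [ih (by omega) (fun j hj hjk ↦ hA j hj (by omega)) hi, mul_zero] at hrec
    exact (mul_eq_zero.mp hrec).resolve_left (hA k hik (by omega))

theorem eq_zero_of_backward (hc : c ∈ solSpace N A B) {i k : ℕ} (hki : k ≤ i) (hi : i ≤ N)
    (hB : ∀ j, k ≤ j → j < i → B j ≠ 0) (hi0 : c ⟨i, by omega⟩ = 0) : c ⟨k, by omega⟩ = 0 := by
  induction i, hki using Nat.le_induction with
  | base => exact hi0
  | succ i hki ih =>
    have hrec : A i * c ⟨i + 1, by omega⟩ = B i * c ⟨i, by omega⟩ := hc ⟨i, by omega⟩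
    rw [hi0, mul_zero, eq_comm] at hrec
    exact ih (by omega) (fun j hj hji ↦ hB j hj (by omega))
      ((mul_eq_zero.mp hrec).resolve_left (hB i hki (by omega)))

theorem eq_zero_of_eval_eq_zero (hc : c ∈ solSpace N A B) {i₀ : ℕ} (hi₀ : i₀ ≤ N)
    (hA : ∀ j, i₀ ≤ j → j < N → A j ≠ 0) (hB : ∀ j < i₀, B j ≠ 0) (h : c ⟨i₀, by omega⟩ = 0) :
    c = 0 := by
  funext ⟨m, hm⟩
  rcases le_total m i₀ with hmi | hmi
  · exact eq_zero_of_backward hc hmi hi₀ (fun j _ hj ↦ hB j hj) h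
  · exact eq_zero_of_forward hc hmi (by omega) (fun j hj _ ↦ hA j hj (by omega)) h

theorem eq_zero_of_eval_eq_zero_of_eval_succ_eq_zero (hc : c ∈ solSpace N A B) {l₀ : ℕ}
    (hl₀ : l₀ < N) (hA : ∀ j < N, j ≠ l₀ → A j ≠ 0) (h₀ : c 0 = 0)
    (hl : c ⟨l₀ + 1, by omega⟩ = 0) : c = 0 := by
  funext ⟨m, hm⟩
  rcases le_or_gt m l₀ with hml | hml
  · exact eq_zero_of_forward hc (Nat.zero_le m) (by omega)
      (fun j _ hj ↦ hA j (by omega) (by omega)) h₀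
  · exact eq_zero_of_forward hc hml (by omega) (fun j hj hjm ↦ hA j (by omega) (by omega)) hl

end solSpace

/-- Past a zero of `A` this is `0`, since `x / 0 = 0`. -/
noncomputable def basicSol (A B : ℕ → ℂ) (i₀ j : ℕ) : ℂ :=
  if j < i₀ then 0 else ∏ k ∈ Ico i₀ j, B k / A k

theorem basicSol_of_lt (A B : ℕ → ℂ) {i₀ j : ℕ} (h : j < i₀) : basicSol A B i₀ j = 0 := if_pos h

theorem basicSol_self (A B : ℕ → ℂ) (i₀ : ℕ) : basicSol A B i₀ i₀ = 1 := by
  simp [basicSol]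

theorem basicSol_succ (A B : ℕ → ℂ) {i₀ j : ℕ} (h : i₀ ≤ j) :
    basicSol A B i₀ (j + 1) = basicSol A B i₀ j * (B j / A j) := by
  simp only [basicSol, if_neg (show ¬ j + 1 < i₀ by omega), if_neg (show ¬ j < i₀ by omega),
    prod_Ico_succ_top h]

theorem basicSol_eq_zero_of_div_eq_zero (A B : ℕ → ℂ) {i₀ j k : ℕ} (hk : i₀ ≤ k) (hkj : k < j)
    (h : B k / A k = 0) : basicSol A B i₀ j = 0 := by
  rw [basicSol, if_neg (by omega)]
  exact prod_eq_zero (mem_Ico.mpr ⟨hk, hkj⟩) h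

theorem basicSol_mem_solSpace {N i₀ : ℕ} {A B : ℕ → ℂ} (hstart : ∀ j, j + 1 = i₀ → A j = 0)
    (hstep : ∀ j, i₀ ≤ j → j < N → A j = 0 → B j * basicSol A B i₀ j = 0) :
    (fun i : Fin (N + 1) ↦ basicSol A B i₀ i) ∈ solSpace N A B := by
  intro ⟨j, hj⟩
  change A j * basicSol A B i₀ (j + 1) = B j * basicSol A B i₀ j
  rcases lt_trichotomy (j + 1) i₀ with hlt | heq | hgt
  · rw [basicSol_of_lt A B hlt, basicSol_of_lt A B (by omega), mul_zero, mul_zero]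
  · rw [hstart j heq, basicSol_of_lt A B (show j < i₀ by omega), zero_mul, mul_zero]
  · rw [basicSol_succ A B (by omega)]
    by_cases hA : A j = 0
    · rw [hA, zero_mul, hstep j (by omega) hj hA]
    · field_simp

theorem finrank_solSpace_eq_one {N i₀ : ℕ} {A B : ℕ → ℂ} (hi₀ : i₀ ≤ N)
    (hstart : ∀ j, j + 1 = i₀ → A j = 0) (hA : ∀ j, i₀ ≤ j → j < N → A j ≠ 0)
    (hB : ∀ j < i₀, B j ≠ 0) : Module.finrank ℂ (solSpace N A B) = 1 := by
  refine (solSpace N A B).finrank_eq_of_eval_injective (fun _ ↦ ⟨i₀, by omega⟩)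
    (fun c hc h ↦ solSpace.eq_zero_of_eval_eq_zero hc hi₀ hA hB (h 0))
    (fun _ i ↦ basicSol A B i₀ i) (fun _ ↦ ?_) (fun k l ↦ ?_)
  · exact basicSol_mem_solSpace hstart fun j hj hjN h ↦ absurd h (hA j hj hjN)
  · simp [Subsingleton.elim k l, basicSol_self]

theorem finrank_solSpace_eq_two {N k₀ l₀ : ℕ} {A B : ℕ → ℂ} (hkl : k₀ ≤ l₀) (hl₀ : l₀ < N)
    (hA : ∀ j < N, j ≠ l₀ → A j ≠ 0) (hAl₀ : A l₀ = 0) (hBk₀ : B k₀ = 0) :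
    Module.finrank ℂ (solSpace N A B) = 2 := by
  have hstep : B l₀ * basicSol A B 0 l₀ = 0 := by
    rcases hkl.eq_or_lt with rfl | hlt
    · rw [hBk₀, zero_mul]
    · rw [basicSol_eq_zero_of_div_eq_zero A B (Nat.zero_le k₀) hlt (by rw [hBk₀, zero_div]),
        mul_zero]
  have hvanish : basicSol A B 0 (l₀ + 1) = 0 :=
    basicSol_eq_zero_of_div_eq_zero A B (Nat.zero_le l₀) l₀.lt_succ_self (by rw [hAl₀, div_zero])
  refine (solSpace N A B).finrank_eq_of_eval_injective ![0, ⟨l₀ + 1, by omega⟩]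
    (fun c hc h ↦ solSpace.eq_zero_of_eval_eq_zero_of_eval_succ_eq_zero hc hl₀ hA (h 0) (h 1))
    ![fun i ↦ basicSol A B 0 i, fun i ↦ basicSol A B (l₀ + 1) i] (fun k ↦ ?_) (fun k l ↦ ?_)
  · fin_cases k
    · refine basicSol_mem_solSpace (fun j hj ↦ absurd hj j.succ_ne_zero) fun j _ hjN hAj ↦ ?_
      obtain rfl : j = l₀ := by_contra fun hj ↦ hA j hjN hj hAj
      exact hstep
    · refine basicSol_mem_solSpace (fun j hj ↦ by rwa [Nat.succ_inj.mp hj]) fun j hj hjN hAj ↦ ?_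
      exact absurd hAj (hA j hjN (by omega))
  · fin_cases k <;> fin_cases l <;>
      simp [basicSol_self, hvanish, basicSol_of_lt A B (Nat.succ_pos l₀)]

def coeffA (α : ℂ) (j : ℕ) : ℂ := (α - j) * (j + 1)

def coeffB (n₁ n₂ : ℕ) (β : ℂ) (j : ℕ) : ℂ := -((β - j) * (n₁ - j) * (n₂ - j))

theorem coeffA_eq_zero_iff {α : ℂ} {j : ℕ} : coeffA α j = 0 ↔ α - j = 0 := by
  rw [coeffA, mul_eq_zero, or_iff_left (by exact_mod_cast j.succ_ne_zero)]

theorem coeffB_eq_zero_iff {n₁ n₂ : ℕ} {β : ℂ} {j : ℕ} (hj : j < min n₁ n₂) :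
    coeffB n₁ n₂ β j = 0 ↔ β - j = 0 := by
  have h₁ : (n₁ : ℂ) - j ≠ 0 := sub_ne_zero.mpr (by exact_mod_cast (by omega : n₁ ≠ j))
  have h₂ : (n₂ : ℂ) - j ≠ 0 := sub_ne_zero.mpr (by exact_mod_cast (by omega : n₂ ≠ j))
  simp [coeffB, h₁, h₂]

theorem eq_of_sub_natCast_eq_zero {α : ℂ} {j l : ℕ} (hj : α - j = 0) (hl : α - l = 0) : j = l := by
  exact_mod_cast (sub_eq_zero.mp hj).symm.trans (sub_eq_zero.mp hl)

section

variable {n₁ n₂ : ℕ} {α β : ℂ}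

theorem finrank_solSpace_coeff_eq_two
    (h : ∃ k₀ l₀ : ℕ, k₀ ≤ l₀ ∧ l₀ < min n₁ n₂ ∧ α - l₀ = 0 ∧ β - k₀ = 0) :
    Module.finrank ℂ (solSpace (min n₁ n₂) (coeffA α) (coeffB n₁ n₂ β)) = 2 := by
  obtain ⟨k₀, l₀, hkl, hl₀, hα, hβ⟩ := h
  refine finrank_solSpace_eq_two hkl hl₀ (fun j _ hj hA ↦ hj ?_) (coeffA_eq_zero_iff.mpr hα)
    ((coeffB_eq_zero_iff (by omega)).mpr hβ)
  exact eq_of_sub_natCast_eq_zero (coeffA_eq_zero_iff.mp hA) hα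

theorem finrank_solSpace_coeff_eq_one
    (h : ¬∃ k₀ l₀ : ℕ, k₀ ≤ l₀ ∧ l₀ < min n₁ n₂ ∧ α - l₀ = 0 ∧ β - k₀ = 0) :
    Module.finrank ℂ (solSpace (min n₁ n₂) (coeffA α) (coeffB n₁ n₂ β)) = 1 := by
  by_cases hα : ∃ l₀ < min n₁ n₂, α - l₀ = 0
  · obtain ⟨l₀, hl₀, hα⟩ := hα
    refine finrank_solSpace_eq_one (i₀ := l₀ + 1) hl₀ ?_ ?_ ?_
    · intro j hj
      rwa [coeffA_eq_zero_iff, Nat.succ_inj.mp hj]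
    · intro j hj _ hA
      have := eq_of_sub_natCast_eq_zero (coeffA_eq_zero_iff.mp hA) hα
      omega
    · intro j hj hB
      exact h ⟨j, l₀, by omega, hl₀, hα, (coeffB_eq_zero_iff (by omega)).mp hB⟩
  · refine finrank_solSpace_eq_one (i₀ := 0) (Nat.zero_le _) (fun j hj ↦ absurd hj j.succ_ne_zero)
      (fun j _ hj hA ↦ hα ⟨j, hj, coeffA_eq_zero_iff.mp hA⟩) (fun j hj ↦ absurd hj j.not_lt_zero)

end

/-- Dimension of the solution space of the recurrence
`(λ₁−λ₃+n₁+n₂−j)(j+1)c_{j+1} = −(λ₂−λ₃+n₂−j)(n₁−j)(n₂−j)c_j`, `0 ≤ j ≤ N−1`, `N = min(n₁,n₂)`: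
it is 2 exactly in the degenerate case `∃ k₀ ≤ ℓ₀ ≤ N−1` with both coefficient vanishings,
and 1 otherwise. -/
theorem stmt8 (n1 n2 : ℕ) (l1 l2 l3 : ℂ) :
    ((∃ k0 l0 : ℕ, k0 ≤ l0 ∧ l0 < min n1 n2
        ∧ l1 - l3 + (n1 : ℂ) + (n2 : ℂ) - (l0 : ℂ) = 0
        ∧ l2 - l3 + (n2 : ℂ) - (k0 : ℂ) = 0) →
      Module.finrank ℂ (solSpace (min n1 n2)
        (fun j => (l1 - l3 + (n1 : ℂ) + (n2 : ℂ) - (j : ℂ)) * ((j : ℂ) + 1))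
        (fun j => -((l2 - l3 + (n2 : ℂ) - (j : ℂ)) * ((n1 : ℂ) - (j : ℂ)) * ((n2 : ℂ) - (j : ℂ))))) = 2)
    ∧ ((¬ ∃ k0 l0 : ℕ, k0 ≤ l0 ∧ l0 < min n1 n2
        ∧ l1 - l3 + (n1 : ℂ) + (n2 : ℂ) - (l0 : ℂ) = 0
        ∧ l2 - l3 + (n2 : ℂ) - (k0 : ℂ) = 0) →
      Module.finrank ℂ (solSpace (min n1 n2)
        (fun j => (l1 - l3 + (n1 : ℂ) + (n2 : ℂ) - (j : ℂ)) * ((j : ℂ) + 1))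
        (fun j => -((l2 - l3 + (n2 : ℂ) - (j : ℂ)) * ((n1 : ℂ) - (j : ℂ)) * ((n2 : ℂ) - (j : ℂ))))) = 1) := by
  exact ⟨finrank_solSpace_coeff_eq_two, finrank_solSpace_coeff_eq_one⟩
end
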